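/- (Proposition 3, inequality) Let Λ ⊆ Γ be finite subsets of ℤ^n, let ψ(r) = Σ_{k∈Λ} c_k exp(2πi⟨k,r⟩) be a nonzero trigonometric polynomial, and let x_1, …, x_N ∈ ℝ^n be points with ψ(x_i) = 0 for all i. Then the |Γ| × N feature matrix Φ_Γ(X) = [φ_Γ(x_1), …, φ_Γ(x_N)], where φ_Γ(x) = (exp(2πi⟨k,x⟩))_{k∈Γ}, satisfies rank(Φ_Γ(X)) ≤ |Γ| − |Γ:Λ|, where |Γ:Λ| = #{m ∈ ℤ^n : m + Λ ⊆ Γ} is the number of valid shifts of Λ within Γ. -/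

import Mathlib

/-!
A trigonometric polynomial with frequencies in `ℤⁿ` is an element of the group algebra `ℂ[ℤⁿ]`,
and evaluation at `x` is the algebra homomorphism induced by the character
`k ↦ exp(2πi⟨k, x⟩)`. For every valid shift `m`, the translate `e_m ψ` is supported in `Γ` and
vanishes at every `x_i`, so its coefficient vector lies in the left kernel of `Φ_Γ(X)`. As `ℂ[ℤⁿ]`
has no zero divisors, multiplication by `ψ ≠ 0` is injective and these translates are linearly
independent; rank–nullity gives the bound.
-/

open scoped BigOperators

/-- The inner product `⟨k, r⟩` of an integer frequency `k ∈ ℤⁿ` with a point `r ∈ ℝⁿ`. -/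
noncomputable def intDot {n : ℕ} (k : Fin n → ℤ) (r : Fin n → ℝ) : ℝ :=
  ∑ i, (k i : ℝ) * r i

/-- The exponential feature `exp(2πi⟨k, x⟩)`. -/
noncomputable def feat {n : ℕ} (k : Fin n → ℤ) (x : Fin n → ℝ) : ℂ :=
  Complex.exp (2 * Real.pi * Complex.I * (intDot k x : ℝ))

open Matrix in
theorem Matrix.rank_add_natCard_le_of_vecMul_eq_zero {K m n ι : Type*} [Field K] [Fintype m]
    [Fintype n] (M : Matrix m n K) {v : ι → m → K} (hv : LinearIndependent K v)
    (hker : ∀ i, v i ᵥ* M = 0) : M.rank + Nat.card ι ≤ Fintype.card m := by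
  have hmem : ∀ i, v i ∈ LinearMap.ker Mᵀ.mulVecLin := fun i => by
    rw [LinearMap.mem_ker, Matrix.mulVecLin_apply, Matrix.mulVec_transpose, hker i]
  have hv' : LinearIndependent K (fun i => (⟨v i, hmem i⟩ : LinearMap.ker Mᵀ.mulVecLin)) :=
    .of_comp (LinearMap.ker _).subtype hv
  have : Finite ι := hv.finite
  have : Fintype ι := .ofFinite ι
  calc M.rank + Nat.card ι
      ≤ Module.finrank K (LinearMap.range Mᵀ.mulVecLin)
          + Module.finrank K (LinearMap.ker Mᵀ.mulVecLin) := by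
        rw [← M.rank_transpose, Nat.card_eq_fintype_card]
        exact Nat.add_le_add_left hv'.fintype_card_le_finrank _
    _ = Fintype.card m := by
        rw [LinearMap.finrank_range_add_finrank_ker, Module.finrank_fintype_fun_eq_card]

namespace AddMonoidAlgebra

theorem linearIndependent_single_one_mul {R G : Type*} [Ring R] [AddMonoid G]
    [NoZeroDivisors (AddMonoidAlgebra R G)] {F : AddMonoidAlgebra R G} (hF : F ≠ 0) :
    LinearIndependent R (fun g : G => single g (1 : R) * F) :=
  (basis G R).linearIndependent.map' (LinearMap.mulRight R F)
    (LinearMap.ker_eq_bot.mpr (mul_left_injective₀ hF))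

theorem linearIndependent_coeff_restrict {R M ι : Type*} [Semiring R] {s : Set M}
    {v : ι → AddMonoidAlgebra R M} (hv : LinearIndependent R v) (hs : ∀ i, v i ∈ supported R R s) :
    LinearIndependent R (fun i (m : s) => (v i).coeff m) := by
  let restrict : AddMonoidAlgebra R M →ₗ[R] s → R :=
    LinearMap.funLeft R R Subtype.val ∘ₗ Finsupp.lcoeFun ∘ₗ (coeffLinearEquiv R).toLinearMap
  refine hv.map_injOn restrict fun p hp q hq hpq => coeff_injective (Finsupp.ext fun m => ?_)
  have hspan : Submodule.span R (Set.range v) ≤ supported R R s :=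
    Submodule.span_le.mpr (Set.range_subset_iff.mpr hs)
  by_cases hm : m ∈ s
  · exact congrFun hpq ⟨m, hm⟩
  · rw [(mem_supported'.mp (hspan hp)) m hm, (mem_supported'.mp (hspan hq)) m hm]

theorem single_mul_mem_supported {R G : Type*} [Semiring R] [AddMonoid G] {s t : Set G}
    {p : AddMonoidAlgebra R G} (hp : p ∈ supported R R s) (g : G) (r : R)
    (hst : ∀ k ∈ s, g + k ∈ t) : single g r * p ∈ supported R R t := by
  classical
  intro k hk
  obtain ⟨k', hk', rfl⟩ := Finset.mem_image.mp (support_coeff_single_mul_subset p r g hk)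
  exact hst k' (hp hk')

end AddMonoidAlgebra

theorem feat_add {n : ℕ} (k l : Fin n → ℤ) (x : Fin n → ℝ) :
    feat (k + l) x = feat k x * feat l x := by
  simp only [feat, intDot, Pi.add_apply, Int.cast_add, add_mul, Finset.sum_add_distrib,
    Complex.ofReal_add, mul_add, Complex.exp_add]

theorem feat_zero {n : ℕ} (x : Fin n → ℝ) : feat 0 x = 1 := by
  simp [feat, intDot]

noncomputable def featChar {n : ℕ} (x : Fin n → ℝ) : Multiplicative (Fin n → ℤ) →* ℂ where
  toFun k := feat k.toAdd x
  map_one' := feat_zero x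
  map_mul' k l := feat_add k.toAdd l.toAdd x

noncomputable def trigPolyEval {n : ℕ} (x : Fin n → ℝ) :
    AddMonoidAlgebra ℂ (Fin n → ℤ) →ₐ[ℂ] ℂ :=
  AddMonoidAlgebra.lift ℂ ℂ _ (featChar x)

theorem trigPolyEval_single {n : ℕ} (x : Fin n → ℝ) (k : Fin n → ℤ) (a : ℂ) :
    trigPolyEval x (AddMonoidAlgebra.single k a) = a * feat k x :=
  AddMonoidAlgebra.lift_single _ k a

theorem trigPolyEval_eq_sum_of_mem_supported {n : ℕ} (x : Fin n → ℝ) {Γ : Finset (Fin n → ℤ)}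
    {p : AddMonoidAlgebra ℂ (Fin n → ℤ)} (hp : p ∈ AddMonoidAlgebra.supported ℂ ℂ ↑Γ) :
    trigPolyEval x p = ∑ γ : Γ, p.coeff γ * feat γ x := by
  rw [trigPolyEval, AddMonoidAlgebra.lift_apply,
    Finsupp.sum_of_support_subset p.coeff (Finset.coe_subset.mp hp)
      (fun k a => a • featChar x (Multiplicative.ofAdd k)) (fun _ _ => zero_smul ℂ _),
    ← Finset.sum_coe_sort Γ]
  rfl

open AddMonoidAlgebra in
theorem feature_matrix_rank_bound_general {n : ℕ} (Λ Γ : Finset (Fin n → ℤ))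
    (c : (Fin n → ℤ) → ℂ) (hc : ∃ k ∈ Λ, c k ≠ 0)
    (N : ℕ) (x : Fin N → (Fin n → ℝ))
    (hon : ∀ i, ∑ k ∈ Λ, c k * feat k (x i) = 0) :
    (Matrix.of fun (k : {k // k ∈ Γ}) (i : Fin N) => feat k.1 (x i)).rank
      ≤ Γ.card - Set.ncard {m : Fin n → ℤ | ∀ k ∈ Λ, m + k ∈ Γ} := by
  classical
  obtain ⟨k₀, hk₀, hck₀⟩ := hc
  set ψ : AddMonoidAlgebra ℂ (Fin n → ℤ) := ∑ k ∈ Λ, single k (c k)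
  have hψ_ne : ψ ≠ 0 := fun h => hck₀ <| by
    simpa [ψ, coeff_sum, Finsupp.single_apply, hk₀] using congr(($h).coeff k₀)
  have hψ_supp : ψ ∈ supported ℂ ℂ ↑Λ := Submodule.sum_mem _ fun k hk => by
    simpa [mem_supported] using Finsupp.support_single_subset.trans (by simpa using hk)
  have hψ_zero : ∀ i, trigPolyEval (x i) ψ = 0 := by
    simpa [ψ, map_sum, trigPolyEval_single] using hon
  set S := {m : Fin n → ℤ | ∀ k ∈ Λ, m + k ∈ Γ}
  have hshift_supp : ∀ m : S, single m.1 (1 : ℂ) * ψ ∈ supported ℂ ℂ ↑Γ := fun m =>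
    single_mul_mem_supported hψ_supp _ _ m.2
  refine le_tsub_of_add_le_right ?_
  rw [← Nat.card_coe_set_eq, ← Fintype.card_coe Γ]
  refine Matrix.rank_add_natCard_le_of_vecMul_eq_zero _
    (linearIndependent_coeff_restrict
      ((linearIndependent_single_one_mul hψ_ne).comp _ Subtype.val_injective) hshift_supp)
    fun m => funext fun i => ?_
  change ∑ γ : Γ, (single m.1 (1 : ℂ) * ψ).coeff γ * feat γ (x i) = 0
  rw [← trigPolyEval_eq_sum_of_mem_supported (x i) (hshift_supp m), map_mul, hψ_zero, mul_zero]

theorem feature_matrix_rank_bound {n : ℕ} (Λ Γ : Finset (Fin n → ℤ)) (hΛΓ : Λ ⊆ Γ)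
    (c : (Fin n → ℤ) → ℂ) (hc : ∃ k ∈ Λ, c k ≠ 0)
    (N : ℕ) (x : Fin N → (Fin n → ℝ))
    (hon : ∀ i, ∑ k ∈ Λ, c k * feat k (x i) = 0) :
    (Matrix.of fun (k : {k // k ∈ Γ}) (i : Fin N) => feat k.1 (x i)).rank
      ≤ Γ.card - Set.ncard {m : Fin n → ℤ | ∀ k ∈ Λ, m + k ∈ Γ} :=
  feature_matrix_rank_bound_general Λ Γ c hc N x hon
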